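/- Let N ≥ 1 and let u₀ ∈ L¹(ℝ^N) have finite second absolute moment 𝒩₂ = ∫_{ℝ^N} |y|² |u₀(y)| dy < ∞. Let M = ∫_{ℝ^N} u₀(x) dx, let 𝒩_{1,i} = ∫_{ℝ^N} y_i u₀(y) dy for i = 1,…,N, and let u(x,t) = ∫_{ℝ^N} G_t(x−y) u₀(y) dy. Then there is a constant C > 0 depending only on N such that for all t > 0 and all x ∈ ℝ^N, |u(x,t) − M·G_t(x) + Σᵢ 𝒩_{1,i} ∂_{x_i} G_t(x)| ≤ C·𝒩₂·t^{−(N+2)/2}. -/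

import Mathlib

open MeasureTheory Real Filter

/-- The Gaussian heat kernel on `ℝ^N`: `G_t(x) = (4πt)^{-N/2} exp(-|x|²/(4t))`. -/
noncomputable def heatKernel (N : ℕ) (t : ℝ) (x : EuclideanSpace ℝ (Fin N)) : ℝ :=
  (4 * π * t) ^ (-(N : ℝ) / 2) * exp (-‖x‖ ^ 2 / (4 * t))

/-- The solution of the heat equation with initial data `u₀`, given by convolution
with the heat kernel: `u(x,t) = ∫ G_t(x-y) u₀(y) dy`. -/
noncomputable def heatSol (N : ℕ) (u₀ : EuclideanSpace ℝ (Fin N) → ℝ)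
    (x : EuclideanSpace ℝ (Fin N)) (t : ℝ) : ℝ :=
  ∫ y, heatKernel N t (x - y) * u₀ y

/-!
Expand `y ↦ G_t(x - y)` to second order at `y = 0`. Against `u₀`, the constant and linear
terms integrate to `M G_t(x)` and `-∑ᵢ 𝒩_{1,i} ∂ᵢG_t(x)`. Along the segment from `x` to `x - y`
the second derivative is `G_t(z) (⟪z, y⟫² / (4t²) - |y|² / (2t))`; by Cauchy–Schwarz and
`r e^{-r} ≤ 1` for `r = |z|² / (4t)` it is at most `(3/2) (4π)^{-N/2} t^{-(N+2)/2} |y|²`, so the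
remainder integrates against `|u₀|` to at most a multiple of `𝒩₂ t^{-(N+2)/2}`.
-/

open scoped RealInnerProductSpace
open Set

theorem norm_sub_sub_deriv_le_of_norm_deriv2_le {E : Type*} [NormedAddCommGroup E]
    [NormedSpace ℝ E] {f f' f'' : ℝ → E} {K : ℝ}
    (hf : ∀ s ∈ Icc (0 : ℝ) 1, HasDerivAt f (f' s) s)
    (hf' : ∀ s ∈ Icc (0 : ℝ) 1, HasDerivAt f' (f'' s) s)
    (hf'' : ∀ s ∈ Icc (0 : ℝ) 1, ‖f'' s‖ ≤ K) :
    ‖f 1 - f 0 - f' 0‖ ≤ K := by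
  have h0 : (0 : ℝ) ∈ Icc (0 : ℝ) 1 := left_mem_Icc.2 zero_le_one
  have hK : 0 ≤ K := (norm_nonneg _).trans (hf'' 0 h0)
  have hdrift : ∀ s ∈ Icc (0 : ℝ) 1, ‖f' s - f' 0‖ ≤ K := fun s hs =>
    calc ‖f' s - f' 0‖ ≤ K * ‖s - 0‖ :=
          (convex_Icc 0 1).norm_image_sub_le_of_norm_hasDerivWithin_le
            (fun r hr => (hf' r hr).hasDerivWithinAt) hf'' h0 hs
      _ ≤ K := by
          rw [sub_zero, Real.norm_of_nonneg hs.1]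
          exact mul_le_of_le_one_right hK hs.2
  have hg : ∀ s ∈ Icc (0 : ℝ) 1,
      HasDerivWithinAt (fun s => f s - s • f' 0) (f' s - f' 0) (Icc 0 1) s := fun s hs => by
    simpa using ((hf s hs).fun_sub ((hasDerivAt_id' s).smul_const (f' 0))).hasDerivWithinAt
  simpa [sub_right_comm] using (convex_Icc (0 : ℝ) 1).norm_image_sub_le_of_norm_hasDerivWithin_le
    hg hdrift h0 (right_mem_Icc.2 zero_le_one)

theorem mul_rpow_div_self {a t : ℝ} (ha : 0 ≤ a) (ht : 0 < t) (r : ℝ) :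
    (a * t) ^ r / t = a ^ r * t ^ (r - 1) := by
  rw [mul_rpow ha ht.le, rpow_sub_one ht.ne', mul_div_assoc]

section HeatKernel

variable {N : ℕ} {t : ℝ}

theorem heatKernel_nonneg (ht : 0 ≤ t) (x : EuclideanSpace ℝ (Fin N)) : 0 ≤ heatKernel N t x := by
  unfold heatKernel
  positivity

theorem heatKernel_le (ht : 0 ≤ t) (x : EuclideanSpace ℝ (Fin N)) :
    heatKernel N t x ≤ (4 * π * t) ^ (-(N : ℝ) / 2) := by
  unfold heatKernel
  refine mul_le_of_le_one_right (by positivity) (exp_le_one_iff.2 ?_)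
  rw [neg_div]
  exact neg_nonpos.2 (by positivity)

theorem continuous_heatKernel : Continuous (heatKernel N t) := by
  unfold heatKernel
  fun_prop

theorem HasDerivAt.heatKernel {f : ℝ → EuclideanSpace ℝ (Fin N)} {f' : EuclideanSpace ℝ (Fin N)}
    {s : ℝ} (hf : HasDerivAt f f' s) :
    HasDerivAt (fun s => heatKernel N t (f s))
      (-(⟪f s, f'⟫ / (2 * t)) * heatKernel N t (f s)) s := by
  refine (((hf.norm_sq.fun_neg.div_const (4 * t)).exp).const_mul
    ((4 * π * t) ^ (-(N : ℝ) / 2))).congr_deriv ?_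
  unfold _root_.heatKernel
  ring

theorem abs_inner_sq_sub_mul_heatKernel_le (ht : 0 < t) (z y : EuclideanSpace ℝ (Fin N)) :
    |(⟪z, y⟫ ^ 2 / (4 * t ^ 2) - ‖y‖ ^ 2 / (2 * t)) * heatKernel N t z| ≤
      3 / 2 * (4 * π) ^ (-(N : ℝ) / 2) * t ^ (-((N : ℝ) + 2) / 2) * ‖y‖ ^ 2 := by
  set c := (4 * π * t) ^ (-(N : ℝ) / 2)
  set r := ‖z‖ ^ 2 / (4 * t)
  have hr : 0 ≤ r := by positivity
  have hG : heatKernel N t z = c * exp (-r) := by rw [heatKernel, neg_div (4 * t) (‖z‖ ^ 2)]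
  have hinner : ⟪z, y⟫ ^ 2 / (4 * t ^ 2) ≤ r * (‖y‖ ^ 2 / t) := by
    have hcs : ⟪z, y⟫ ^ 2 ≤ (‖z‖ * ‖y‖) ^ 2 := by
      rw [← sq_abs]
      exact pow_le_pow_left₀ (abs_nonneg _) (abs_real_inner_le_norm z y) 2
    calc ⟪z, y⟫ ^ 2 / (4 * t ^ 2) ≤ (‖z‖ * ‖y‖) ^ 2 / (4 * t ^ 2) := by gcongr
      _ = r * (‖y‖ ^ 2 / t) := by simp only [r]; field_simp
  have hsub : |⟪z, y⟫ ^ 2 / (4 * t ^ 2) - ‖y‖ ^ 2 / (2 * t)| ≤ (r + 1 / 2) * (‖y‖ ^ 2 / t) := by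
    refine (abs_sub _ _).trans ?_
    rw [abs_of_nonneg (by positivity), abs_of_nonneg (by positivity)]
    calc ⟪z, y⟫ ^ 2 / (4 * t ^ 2) + ‖y‖ ^ 2 / (2 * t) ≤ r * (‖y‖ ^ 2 / t) + ‖y‖ ^ 2 / (2 * t) := by
          gcongr
      _ = (r + 1 / 2) * (‖y‖ ^ 2 / t) := by ring
  have hdecay : (r + 1 / 2) * exp (-r) ≤ 3 / 2 := by
    have h1 : r * exp (-r) ≤ 1 :=
      (mul_exp_neg_le_exp_neg_one r).trans (exp_le_one_iff.2 (by norm_num))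
    have h2 : exp (-r) ≤ 1 := exp_le_one_iff.2 (by linarith)
    linarith
  have hprefactor : c / t = (4 * π) ^ (-(N : ℝ) / 2) * t ^ (-((N : ℝ) + 2) / 2) := by
    rw [mul_rpow_div_self (by positivity) ht, show -(N : ℝ) / 2 - 1 = -((N : ℝ) + 2) / 2 by ring]
  calc _ = |⟪z, y⟫ ^ 2 / (4 * t ^ 2) - ‖y‖ ^ 2 / (2 * t)| * heatKernel N t z := by
        rw [abs_mul, abs_of_nonneg (heatKernel_nonneg ht.le z)]
    _ ≤ (r + 1 / 2) * (‖y‖ ^ 2 / t) * (c * exp (-r)) := by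
        rw [← hG]
        exact mul_le_mul_of_nonneg_right hsub (heatKernel_nonneg ht.le z)
    _ = (r + 1 / 2) * exp (-r) * (c / t) * ‖y‖ ^ 2 := by ring
    _ ≤ 3 / 2 * (c / t) * ‖y‖ ^ 2 := by gcongr
    _ = _ := by rw [hprefactor]; ring

theorem abs_heatKernel_sub_sub_inner_le (ht : 0 < t) (x y : EuclideanSpace ℝ (Fin N)) :
    |heatKernel N t (x - y) - heatKernel N t x - ⟪x, y⟫ / (2 * t) * heatKernel N t x| ≤
      3 / 2 * (4 * π) ^ (-(N : ℝ) / 2) * t ^ (-((N : ℝ) + 2) / 2) * ‖y‖ ^ 2 := by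
  have hline : ∀ s : ℝ, HasDerivAt (fun s : ℝ => x - s • y) (-y) s := fun s => by
    simpa using (hasDerivAt_const s x).fun_sub ((hasDerivAt_id' s).smul_const y)
  have hd1 : ∀ s : ℝ, HasDerivAt (fun s => heatKernel N t (x - s • y))
      (⟪x - s • y, y⟫ / (2 * t) * heatKernel N t (x - s • y)) s := fun s => by
    simpa [inner_neg_right, neg_div] using (hline s).heatKernel (t := t)
  have hd2 : ∀ s : ℝ, HasDerivAt (fun s => ⟪x - s • y, y⟫ / (2 * t) * heatKernel N t (x - s • y))
      ((⟪x - s • y, y⟫ ^ 2 / (4 * t ^ 2) - ‖y‖ ^ 2 / (2 * t)) * heatKernel N t (x - s • y)) s := by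
    intro s
    have hinner : HasDerivAt (fun s => ⟪x - s • y, y⟫) (-‖y‖ ^ 2) s := by
      simpa [real_inner_self_eq_norm_sq] using (hline s).inner ℝ (hasDerivAt_const s y)
    exact ((hinner.div_const (2 * t)).fun_mul (hd1 s)).congr_deriv (by ring)
  simpa using norm_sub_sub_deriv_le_of_norm_deriv2_le (fun s _ => hd1 s) (fun s _ => hd2 s)
    (fun s _ => abs_inner_sq_sub_mul_heatKernel_le ht (x - s • y) y)

end HeatKernel

theorem MeasureTheory.Integrable.clm_mul_of_integrable_norm_sq_mul {E : Type*}
    [NormedAddCommGroup E] [NormedSpace ℝ E] [MeasurableSpace E] [OpensMeasurableSpace E] {μ : Measure E} {u : E → ℝ}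
    (hu : Integrable u μ) (hu2 : Integrable (fun y => ‖y‖ ^ 2 * |u y|) μ) (L : StrongDual ℝ E) :
    Integrable (fun y => L y * u y) μ := by
  refine ((hu.abs.add hu2).const_mul ‖L‖).mono' (L.continuous.aestronglyMeasurable.mul hu.1)
    (ae_of_all _ fun y => ?_)
  have hy : ‖y‖ ≤ 1 + ‖y‖ ^ 2 := by nlinarith [sq_nonneg (‖y‖ - 1)]
  calc ‖L y * u y‖ = ‖L y‖ * |u y| := by rw [norm_mul, Real.norm_eq_abs (u y)]
    _ ≤ ‖L‖ * ‖y‖ * |u y| := by gcongr; exact L.le_opNorm y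
    _ ≤ ‖L‖ * (1 + ‖y‖ ^ 2) * |u y| := by gcongr
    _ = ‖L‖ * (|u y| + ‖y‖ ^ 2 * |u y|) := by ring

theorem integral_inner_mul_eq_sum {N : ℕ} {u : EuclideanSpace ℝ (Fin N) → ℝ}
    (hu : ∀ i, Integrable (fun y : EuclideanSpace ℝ (Fin N) => y i * u y))
    (x : EuclideanSpace ℝ (Fin N)) :
    ∫ y, ⟪x, y⟫ * u y = ∑ i, x i * ∫ y : EuclideanSpace ℝ (Fin N), y i * u y := by
  simp_rw [← integral_const_mul]
  rw [← integral_finsetSum _ fun i _ => (hu i).const_mul (x i)]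
  refine integral_congr_ae (ae_of_all _ fun y => ?_)
  simp only [PiLp.inner_apply, RCLike.inner_apply, conj_trivial, Finset.sum_mul]
  exact Finset.sum_congr rfl fun i _ => by ring

theorem heatSol_sub_add_eq_integral {N : ℕ} {u₀ : EuclideanSpace ℝ (Fin N) → ℝ} {t : ℝ}
    (hu : Integrable u₀) (hu2 : Integrable (fun y => ‖y‖ ^ 2 * |u₀ y|)) (ht : 0 ≤ t)
    (x : EuclideanSpace ℝ (Fin N)) :
    heatSol N u₀ x t - (∫ y, u₀ y) * heatKernel N t x +
        ∑ i : Fin N, (∫ y : EuclideanSpace ℝ (Fin N), y i * u₀ y) *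
          (-(x i / (2 * t)) * heatKernel N t x) =
      ∫ y, (heatKernel N t (x - y) - heatKernel N t x - ⟪x, y⟫ / (2 * t) * heatKernel N t x) *
        u₀ y := by
  set G := heatKernel N t
  have hsol : Integrable (fun y => G (x - y) * u₀ y) :=
    hu.bdd_mul (continuous_heatKernel.comp (continuous_sub_left x)).aestronglyMeasurable
      (ae_of_all _ fun y => by
        rw [Real.norm_of_nonneg (heatKernel_nonneg ht _)]
        exact heatKernel_le ht _)
  have hfirst : Integrable (fun y => ⟪x, y⟫ * u₀ y) :=
    hu.clm_mul_of_integrable_norm_sq_mul hu2 (innerSL ℝ x)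
  have hmoment := integral_inner_mul_eq_sum
    (fun i => hu.clm_mul_of_integrable_norm_sq_mul hu2 (EuclideanSpace.proj i)) x
  have hsplit : ∀ y, (G (x - y) - G x - ⟪x, y⟫ / (2 * t) * G x) * u₀ y =
      G (x - y) * u₀ y - G x * u₀ y - G x / (2 * t) * (⟪x, y⟫ * u₀ y) := fun y => by ring
  simp_rw [hsplit]
  rw [integral_sub (hsol.sub' (hu.const_mul _)) (hfirst.const_mul _),
    integral_sub hsol (hu.const_mul _), integral_const_mul, integral_const_mul, hmoment,
    heatSol, Finset.mul_sum, sub_eq_add_neg _ (Finset.sum _ _), ← Finset.sum_neg_distrib]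
  have hterm : ∀ i, (∫ y : EuclideanSpace ℝ (Fin N), y i * u₀ y) * (-(x i / (2 * t)) * G x) =
      -(G x / (2 * t) * (x i * ∫ y : EuclideanSpace ℝ (Fin N), y i * u₀ y)) := fun i => by ring
  simp only [hterm]
  ring

theorem heat_convergence_rate_second_moment_sup_general (N : ℕ) :
    ∃ C : ℝ, 0 < C ∧ ∀ u₀ : EuclideanSpace ℝ (Fin N) → ℝ,
      Integrable u₀ →
      Integrable (fun y => ‖y‖ ^ 2 * |u₀ y|) →
      ∀ t : ℝ, 0 < t → ∀ x : EuclideanSpace ℝ (Fin N),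
        |heatSol N u₀ x t - (∫ y, u₀ y) * heatKernel N t x +
            ∑ i : Fin N, (∫ y : EuclideanSpace ℝ (Fin N), y i * u₀ y) *
              (-(x i / (2 * t)) * heatKernel N t x)| ≤
          C * (∫ y, ‖y‖ ^ 2 * |u₀ y|) * t ^ (-((N : ℝ) + 2) / 2) := by
  set C : ℝ := 3 / 2 * (4 * π) ^ (-(N : ℝ) / 2)
  refine ⟨C, by positivity, fun u₀ hu hu2 t ht x => ?_⟩
  rw [heatSol_sub_add_eq_integral hu hu2 ht.le x, mul_right_comm,
    ← integral_const_mul (C * t ^ (-((N : ℝ) + 2) / 2)), ← Real.norm_eq_abs]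
  refine norm_integral_le_of_norm_le (hu2.const_mul _) (ae_of_all _ fun y => ?_)
  rw [norm_mul, Real.norm_eq_abs, Real.norm_eq_abs, ← mul_assoc]
  exact mul_le_mul_of_nonneg_right (abs_heatKernel_sub_sub_inner_le ht x y) (abs_nonneg _)

/-- Second-order sup-norm asymptotics: for data with finite second absolute moment,
`|u(x,t) − M·G_t(x) + Σᵢ 𝒩_{1,i} ∂_{x_i}G_t(x)| ≤ C·𝒩₂·t^{-(N+2)/2}` with `C = C(N)`,
where `∂_{x_i}G_t(x) = -(x_i/(2t))·G_t(x)`. -/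
theorem heat_convergence_rate_second_moment_sup (N : ℕ) (hN : 1 ≤ N) :
    ∃ C : ℝ, 0 < C ∧ ∀ u₀ : EuclideanSpace ℝ (Fin N) → ℝ,
      Integrable u₀ →
      Integrable (fun y => ‖y‖ ^ 2 * |u₀ y|) →
      ∀ t : ℝ, 0 < t → ∀ x : EuclideanSpace ℝ (Fin N),
        |heatSol N u₀ x t - (∫ y, u₀ y) * heatKernel N t x +
            ∑ i : Fin N, (∫ y : EuclideanSpace ℝ (Fin N), y i * u₀ y) *
              (-(x i / (2 * t)) * heatKernel N t x)| ≤
          C * (∫ y, ‖y‖ ^ 2 * |u₀ y|) * t ^ (-((N : ℝ) + 2) / 2) :=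
  heat_convergence_rate_second_moment_sup_general N
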